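/- arXiv:2007.09410 — 5 statements merged into one kernel-verified Lean document; each statement's English description precedes it below -/
import Mathlib

section
/- Let I be a finite nonempty index set and let λ : I → ℝ be strictly positive. For every x : I → ℝ with x_i > 0 for all i and Σ_{i∈I} x_i = 1, it holds that Σ_{i∈I} λ_i / x_i² ≥ ( Σ_{i∈I} λ_i^{1/3} )³, and equality holds if and only if x_i = λ_i^{1/3} / Σ_{j∈I} λ_j^{1/3} for every i ∈ I. -/
/-!
With `c = ∑ uᵢ`, the tangent-line bound `u³ / x² ≥ 3c²u - 2c³x` (the tangent plane of the convex
function `(u, x) ↦ u³ / x²` along the ray `u = c x`) sums, under `∑ xᵢ = 1`, to `∑ uᵢ³ / xᵢ² ≥ c³`,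
with equality exactly when `uᵢ = c xᵢ` for every `i`. The theorem is the case `uᵢ = λᵢ^{1/3}`.
-/

open Finset

lemma cube_div_sq_sub_tangent_eq {u c x : ℝ} (hx : x ≠ 0) :
    u ^ 3 / x ^ 2 - (3 * c ^ 2 * u - 2 * c ^ 3 * x) = (u - c * x) ^ 2 * (u + 2 * c * x) / x ^ 2 := by
  field_simp
  ring

lemma tangent_le_cube_div_sq {u c x : ℝ} (hu : 0 ≤ u) (hc : 0 ≤ c) (hx : 0 < x) :
    3 * c ^ 2 * u - 2 * c ^ 3 * x ≤ u ^ 3 / x ^ 2 := by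
  rw [← sub_nonneg, cube_div_sq_sub_tangent_eq hx.ne']
  positivity

lemma tangent_eq_cube_div_sq_iff {u c x : ℝ} (hu : 0 ≤ u) (hc : 0 ≤ c) (hx : 0 < x) :
    3 * c ^ 2 * u - 2 * c ^ 3 * x = u ^ 3 / x ^ 2 ↔ u = c * x := by
  rw [← sub_eq_zero, ← neg_eq_zero, neg_sub, cube_div_sq_sub_tangent_eq hx.ne',
    div_eq_zero_iff, mul_eq_zero, sq_eq_zero_iff, sq_eq_zero_iff, sub_eq_zero]
  have hcx : 0 ≤ c * x := mul_nonneg hc hx.le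
  constructor
  · rintro ((h | h) | h)
    · exact h
    · have hu0 : u = 0 := by linarith
      have hcx0 : c * x = 0 := by linarith
      rw [hu0, hcx0]
    · exact absurd h hx.ne'
  · exact fun h => Or.inl (Or.inl h)

section TangentSum

variable {ι : Type*} {s : Finset ι} {u x : ι → ℝ}

lemma sum_tangent_eq_cube_sum (hsum : ∑ i ∈ s, x i = 1) :
    ∑ i ∈ s, (3 * (∑ j ∈ s, u j) ^ 2 * u i - 2 * (∑ j ∈ s, u j) ^ 3 * x i) =
      (∑ j ∈ s, u j) ^ 3 := by
  rw [sum_sub_distrib, ← mul_sum, ← mul_sum, hsum]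
  ring

lemma cube_sum_le_sum_cube_div_sq (hu : ∀ i ∈ s, 0 ≤ u i) (hx : ∀ i ∈ s, 0 < x i)
    (hsum : ∑ i ∈ s, x i = 1) :
    (∑ i ∈ s, u i) ^ 3 ≤ ∑ i ∈ s, u i ^ 3 / x i ^ 2 := by
  rw [← sum_tangent_eq_cube_sum hsum]
  exact sum_le_sum fun i hi => tangent_le_cube_div_sq (hu i hi) (sum_nonneg hu) (hx i hi)

lemma sum_cube_div_sq_eq_cube_sum_iff (hu : ∀ i ∈ s, 0 ≤ u i) (hx : ∀ i ∈ s, 0 < x i)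
    (hsum : ∑ i ∈ s, x i = 1) :
    ∑ i ∈ s, u i ^ 3 / x i ^ 2 = (∑ i ∈ s, u i) ^ 3 ↔ ∀ i ∈ s, u i = (∑ j ∈ s, u j) * x i := by
  rw [eq_comm, ← sum_tangent_eq_cube_sum hsum, sum_eq_sum_iff_of_le fun i hi =>
    tangent_le_cube_div_sq (hu i hi) (sum_nonneg hu) (hx i hi)]
  exact forall₂_congr fun i hi => tangent_eq_cube_div_sq_iff (hu i hi) (sum_nonneg hu) (hx i hi)

end TangentSum

theorem stmt3_general {I : Type*} [Fintype I]
    (lam : I → ℝ) (hlam : ∀ i, 0 < lam i)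
    (x : I → ℝ) (hx : ∀ i, 0 < x i) (hsum : ∑ i, x i = 1) :
    ((∑ i, lam i ^ ((1 : ℝ) / 3)) ^ 3 ≤ ∑ i, lam i / x i ^ 2) ∧
    ((∑ i, lam i / x i ^ 2 = (∑ i, lam i ^ ((1 : ℝ) / 3)) ^ 3) ↔
      ∀ i, x i = lam i ^ ((1 : ℝ) / 3) / ∑ j, lam j ^ ((1 : ℝ) / 3)) := by
  set u : I → ℝ := fun i => lam i ^ ((1 : ℝ) / 3)
  have hu : ∀ i ∈ univ, 0 < u i := fun i _ => Real.rpow_pos_of_pos (hlam i) _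
  have hu_cube : ∀ i, u i ^ 3 = lam i := fun i => by
    show (lam i ^ ((1 : ℝ) / 3)) ^ 3 = lam i
    rw [one_div, ← Nat.cast_ofNat, Real.rpow_inv_natCast_pow (hlam i).le three_ne_zero]
  have hc : 0 < ∑ j, u j := sum_pos hu (nonempty_of_sum_ne_zero (hsum ▸ one_ne_zero))
  have hle := cube_sum_le_sum_cube_div_sq (fun i hi => (hu i hi).le) (fun i _ => hx i) hsum
  have heq := sum_cube_div_sq_eq_cube_sum_iff (fun i hi => (hu i hi).le) (fun i _ => hx i) hsum
  simp only [hu_cube, mem_univ, true_imp_iff] at hle heq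
  refine ⟨hle, heq.trans (forall_congr' fun i => ?_)⟩
  rw [eq_div_iff hc.ne', mul_comm, eq_comm]

/-- For positive `λ` and positive fractions `x` summing to `1`,
`∑ λᵢ / xᵢ² ≥ (∑ λᵢ^{1/3})³`, with equality iff `xᵢ = λᵢ^{1/3} / ∑ λⱼ^{1/3}`. -/
theorem stmt3 {I : Type*} [Fintype I] [Nonempty I]
    (lam : I → ℝ) (hlam : ∀ i, 0 < lam i)
    (x : I → ℝ) (hx : ∀ i, 0 < x i) (hsum : ∑ i, x i = 1) :
    ((∑ i, lam i ^ ((1 : ℝ) / 3)) ^ 3 ≤ ∑ i, lam i / x i ^ 2) ∧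
    ((∑ i, lam i / x i ^ 2 = (∑ i, lam i ^ ((1 : ℝ) / 3)) ^ 3) ↔
      ∀ i, x i = lam i ^ ((1 : ℝ) / 3) / ∑ j, lam j ^ ((1 : ℝ) / 3)) :=
  stmt3_general lam hlam x hx hsum
end

section
/- Let I be a finite nonempty index set, λ : I → ℝ strictly positive, and let W > 0 and φ > 0. Over all liquidity allocations ω : I → ℝ with ω_i > 0 and Σ_{i∈I} ω_i = W, the quantity Σ_{i∈I} 8φλ_i/ω_i² attains its minimum value (8φ/W²)·( Σ_{i∈I} λ_i^{1/3} )³, and the minimum is attained exactly at ω_i = W·λ_i^{1/3} / Σ_{j∈I} λ_j^{1/3}. -/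
/-!
With `μᵢ = λᵢ^{1/3}`, `S = ∑ μᵢ` and `aᵢ = W μᵢ / S` the fee rate is `∑ 8φλᵢ/ωᵢ² = k ∑ aᵢ³/ωᵢ²`
with `k = 8φS³/W³`. By AM-GM, `aᵢ³/ωᵢ² + ωᵢ + ωᵢ ≥ 3aᵢ`, with equality iff `ωᵢ = aᵢ`; summing and
using `∑ ωᵢ = ∑ aᵢ = W` gives `∑ aᵢ³/ωᵢ² ≥ W`, with equality iff `ω = a`.
-/

open Finset

lemma pow_three_div_sq_sub_eq {a t : ℝ} (ht : t ≠ 0) :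
    a ^ 3 / t ^ 2 - (3 * a - 2 * t) = (a - t) ^ 2 * (a + 2 * t) / t ^ 2 := by
  field_simp
  ring

lemma three_mul_sub_two_mul_le_pow_three_div_sq {a t : ℝ} (ha : 0 ≤ a) (ht : 0 < t) :
    3 * a - 2 * t ≤ a ^ 3 / t ^ 2 := by
  have h := pow_three_div_sq_sub_eq (a := a) ht.ne'
  have : 0 ≤ (a - t) ^ 2 * (a + 2 * t) / t ^ 2 := by positivity
  linarith

lemma pow_three_div_sq_eq_iff {a t : ℝ} (ha : 0 ≤ a) (ht : 0 < t) :
    a ^ 3 / t ^ 2 = 3 * a - 2 * t ↔ t = a := by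
  rw [← sub_eq_zero, pow_three_div_sq_sub_eq ht.ne', div_eq_zero_iff, mul_eq_zero,
    pow_eq_zero_iff two_ne_zero, sub_eq_zero, eq_comm (a := a)]
  have : a + 2 * t ≠ 0 := by positivity
  have : t ^ 2 ≠ 0 := by positivity
  tauto

lemma rpow_one_div_three_pow_three {x : ℝ} (hx : 0 ≤ x) : (x ^ ((1 : ℝ) / 3)) ^ 3 = x := by
  simpa using Real.rpow_inv_natCast_pow hx (n := 3) three_ne_zero

section

variable {ι : Type*} (s : Finset ι) {a ω : ι → ℝ}

lemma sum_eq_sum_three_mul_sub_two_mul (hsum : ∑ i ∈ s, ω i = ∑ i ∈ s, a i) :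
    ∑ i ∈ s, (3 * a i - 2 * ω i) = ∑ i ∈ s, a i := by
  rw [sum_sub_distrib, ← mul_sum, ← mul_sum, hsum]
  ring

lemma sum_le_sum_pow_three_div_sq (ha : ∀ i ∈ s, 0 ≤ a i) (hω : ∀ i ∈ s, 0 < ω i)
    (hsum : ∑ i ∈ s, ω i = ∑ i ∈ s, a i) :
    ∑ i ∈ s, a i ≤ ∑ i ∈ s, a i ^ 3 / ω i ^ 2 := by
  rw [← sum_eq_sum_three_mul_sub_two_mul s hsum]
  exact sum_le_sum fun i hi => three_mul_sub_two_mul_le_pow_three_div_sq (ha i hi) (hω i hi)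

lemma sum_pow_three_div_sq_eq_sum_iff (ha : ∀ i ∈ s, 0 ≤ a i) (hω : ∀ i ∈ s, 0 < ω i)
    (hsum : ∑ i ∈ s, ω i = ∑ i ∈ s, a i) :
    ∑ i ∈ s, a i ^ 3 / ω i ^ 2 = ∑ i ∈ s, a i ↔ ∀ i ∈ s, ω i = a i := by
  rw [← sum_eq_sum_three_mul_sub_two_mul s hsum, eq_comm, sum_eq_sum_iff_of_le fun i hi =>
    three_mul_sub_two_mul_le_pow_three_div_sq (ha i hi) (hω i hi)]
  exact forall₂_congr fun i hi => by rw [eq_comm, pow_three_div_sq_eq_iff (ha i hi) (hω i hi)]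

end

/-- Optimal liquidity allocation: over positive allocations `ω` summing to `W`, the total
record-fee rate `∑ 8φλᵢ/ωᵢ²` attains the minimum value `(8φ/W²)(∑ λᵢ^{1/3})³`, exactly at
`ωᵢ = W λᵢ^{1/3} / ∑ λⱼ^{1/3}`. -/
theorem stmt4 {I : Type*} [Fintype I] [Nonempty I]
    (lam : I → ℝ) (hlam : ∀ i, 0 < lam i)
    (W φ : ℝ) (hW : 0 < W) (hφ : 0 < φ) :
    IsLeast { c : ℝ | ∃ ω : I → ℝ, (∀ i, 0 < ω i) ∧ (∑ i, ω i = W) ∧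
        c = ∑ i, 8 * φ * lam i / ω i ^ 2 }
      (8 * φ / W ^ 2 * (∑ i, lam i ^ ((1 : ℝ) / 3)) ^ 3) ∧
    ∀ ω : I → ℝ, (∀ i, 0 < ω i) → (∑ i, ω i = W) →
      ((∑ i, 8 * φ * lam i / ω i ^ 2
          = 8 * φ / W ^ 2 * (∑ i, lam i ^ ((1 : ℝ) / 3)) ^ 3) ↔
        ∀ i, ω i = W * lam i ^ ((1 : ℝ) / 3) / ∑ j, lam j ^ ((1 : ℝ) / 3)) := by
  have hμ : ∀ i, 0 < lam i ^ ((1 : ℝ) / 3) := fun i => Real.rpow_pos_of_pos (hlam i) _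
  set S := ∑ i, lam i ^ ((1 : ℝ) / 3)
  have hS : 0 < S := sum_pos (fun i _ => hμ i) univ_nonempty
  set a : I → ℝ := fun i => W * lam i ^ ((1 : ℝ) / 3) / S
  have ha : ∀ i, 0 < a i := fun i => div_pos (mul_pos hW (hμ i)) hS
  have hsum_a : ∑ i, a i = W := by
    rw [← sum_div, ← mul_sum, mul_div_cancel_right₀ _ hS.ne']
  set k := 8 * φ * S ^ 3 / W ^ 3
  have hk : 0 < k := by positivity
  have hfee : ∀ ω : I → ℝ, ∑ i, 8 * φ * lam i / ω i ^ 2 = k * ∑ i, a i ^ 3 / ω i ^ 2 := by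
    intro ω
    rw [mul_sum]
    refine sum_congr rfl fun i _ => ?_
    simp only [a, k, div_pow, mul_pow, rpow_one_div_three_pow_three (hlam i).le]
    field_simp
  have hmin : 8 * φ / W ^ 2 * S ^ 3 = k * ∑ i, a i := by
    rw [hsum_a]
    simp only [k]
    field_simp
  have hsum_iff := fun (ω : I → ℝ) (hω : ∀ i, 0 < ω i) (hωsum : ∑ i, ω i = W) =>
    sum_pow_three_div_sq_eq_sum_iff univ (fun i _ => (ha i).le) (fun i _ => hω i)
      (hωsum.trans hsum_a.symm)
  refine ⟨⟨⟨a, ha, hsum_a, ?_⟩, ?_⟩, fun ω hω hωsum => ?_⟩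
  · rw [hfee, hmin, (hsum_iff a ha hsum_a).2 fun _ _ => rfl]
  · rintro c ⟨ω, hω, hωsum, rfl⟩
    rw [hfee, hmin]
    exact mul_le_mul_of_nonneg_left (sum_le_sum_pow_three_div_sq univ (fun i _ => (ha i).le)
      (fun i _ => hω i) (hωsum.trans hsum_a.symm)) hk.le
  · rw [hfee, hmin, mul_right_inj' hk.ne', hsum_iff ω hω hωsum]
    simp only [mem_univ, true_implies, a]
end

section
/- Let V be a finite set and let T₁ and T₂ be two trees on the same vertex set V. Then there exists a bijection ψ from the edge set of T₁ to the edge set of T₂ such that for every edge e = {u, v} of T₁, the edge ψ(e) lies on the unique path in T₂ between u and v. -/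
/-!
By Hall's theorem it suffices that any `k` edges of `T₁` have `T₂`-paths that together use at
least `k` edges of `T₂`. Over `𝔽₂`, the incidence vector of an edge `uv` is the sum of the
incidence vectors of the edges on the `uv`-path, so the incidence vectors of the `k` edges of
`T₁` lie in the span of those of the edges used. They are linearly independent because in a
nonempty forest some vertex is met by exactly one edge. Since both trees have `|V| - 1` edges,
the resulting injection is a bijection.
-/

open Finset Submodule Module

theorem LinearIndependent.exists_injective_mem_of_mem_span {K M ι α : Type*} [DivisionRing K]
    [AddCommGroup M] [Module K M] {v : ι → M} (hv : LinearIndependent K v)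
    (w : α → M) (t : ι → Finset α) (ht : ∀ i, v i ∈ span K (w '' t i)) :
    ∃ f : ι → α, Function.Injective f ∧ ∀ i, f i ∈ t i := by
  classical
  refine (all_card_le_biUnion_card_iff_exists_injective t).mp fun A ↦ ?_
  have hspan : span K (Set.range fun i : A ↦ v i) ≤ span K ((A.biUnion t).image w : Set M) := by
    rw [span_le]
    rintro _ ⟨i, rfl⟩
    refine span_mono ?_ (ht i)
    rintro _ ⟨a, ha, rfl⟩
    exact mem_image_of_mem w (mem_biUnion.mpr ⟨i, i.2, ha⟩)
  calc #A = finrank K (span K (Set.range fun i : A ↦ v i)) :=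
        ((finrank_span_eq_card (hv.comp _ Subtype.val_injective)).trans (Fintype.card_coe A)).symm
    _ ≤ finrank K (span K ((A.biUnion t).image w : Set M)) := Submodule.finrank_mono hspan
    _ ≤ #((A.biUnion t).image w) := finrank_span_finset_le_card _
    _ ≤ #(A.biUnion t) := card_image_le

namespace Sym2

variable {V : Type*} [DecidableEq V]

def incidenceVec (e : Sym2 V) : V → ZMod 2 := fun w ↦ if w ∈ e then 1 else 0

theorem incidenceVec_mk {a b : V} (h : a ≠ b) :
    incidenceVec s(a, b) = Pi.single a 1 + Pi.single b 1 := by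
  funext w
  rcases eq_or_ne w a with rfl | hwa
  · simp [incidenceVec, h]
  · rcases eq_or_ne w b with rfl | hwb
    · simp [incidenceVec, hwa]
    · simp [incidenceVec, hwa, hwb]

end Sym2

namespace SimpleGraph

open Sym2

variable {V : Type*} {G : SimpleGraph V}

theorem Walk.sum_incidenceVec_edges [DecidableEq V] {u v : V} (p : G.Walk u v) :
    (p.edges.map incidenceVec).sum = Pi.single u 1 + Pi.single v 1 := by
  induction p with
  | nil => exact (ZModModule.add_self _).symm
  | cons h _ ih =>
    rw [edges_cons, List.map_cons, List.sum_cons, ih, incidenceVec_mk h.ne,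
      ZModModule.add_add_add_cancel]

theorem Walk.IsPath.sum_incidenceVec_edges [DecidableEq V] {u v : V} {p : G.Walk u v}
    (hp : p.IsPath) (huv : u ≠ v) :
    ∑ e ∈ p.edges.toFinset, incidenceVec e = incidenceVec s(u, v) := by
  rw [List.sum_toFinset _ hp.isTrail.edges_nodup, p.sum_incidenceVec_edges, incidenceVec_mk huv]

theorem sum_incidenceVec_edgeFinset_apply [DecidableEq V] [Fintype G.edgeSet] (w : V)
    [Fintype (G.neighborSet w)] :
    (∑ e ∈ G.edgeFinset, incidenceVec e) w = G.degree w := by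
  rw [Finset.sum_apply]
  simp only [incidenceVec]
  rw [sum_boole, ← incidenceFinset_eq_filter, card_incidenceFinset_eq_degree]

theorem IsAcyclic.exists_degree_eq_one [Finite G.edgeSet] [G.LocallyFinite] (hG : G.IsAcyclic)
    {a b : V} (hab : G.Adj a b) : ∃ v, G.degree v = 1 := by
  have : Nonempty V := ⟨a⟩
  -- A longest path cannot be extended at its start, so its first vertex is a leaf.
  obtain ⟨u, v, p, hp, hmax⟩ := Walk.exists_isPath_forall_isPath_length_le_length G
  have hnil : ¬p.Nil := by
    have := hmax a b (.cons hab .nil) (by simp [hab.ne])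
    rw [← Walk.length_eq_zero_iff]
    simp only [Walk.length_cons, Walk.length_nil] at this
    omega
  refine ⟨u, degree_eq_one_iff_existsUnique_adj.mpr ⟨_, p.adj_snd hnil, fun w hadj ↦ ?_⟩⟩
  apply hG.eq_snd_of_adj_start hp hadj
  have : ¬(p.cons hadj.symm).IsPath := by grind [Walk.length_cons]
  grind [Walk.IsPath.cons]

theorem IsAcyclic.sum_incidenceVec_ne_zero [Fintype V] [DecidableEq V] (hG : G.IsAcyclic)
    {S : Finset (Sym2 V)} (hS : ↑S ⊆ G.edgeSet) (hne : S.Nonempty) :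
    ∑ e ∈ S, incidenceVec e ≠ 0 := by
  classical
  let H := fromEdgeSet (S : Set (Sym2 V))
  have hHS : H.edgeFinset = S := by
    ext e
    simpa [H] using fun he ↦ G.not_isDiag_of_mem_edgeSet (hS he)
  have hH : H.IsAcyclic := hG.anti ((fromEdgeSet_mono hS).trans_eq G.fromEdgeSet_edgeSet)
  obtain ⟨e, he⟩ := hne
  induction e using Sym2.ind with
  | _ a b =>
    have hab : H.Adj a b := by
      rw [← mem_edgeSet, ← coe_edgeFinset, hHS]
      exact he
    obtain ⟨w, hw⟩ := hH.exists_degree_eq_one hab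
    intro h0
    have := congrFun h0 w
    rw [← hHS, sum_incidenceVec_edgeFinset_apply, hw] at this
    exact one_ne_zero this

theorem IsAcyclic.linearIndependent_incidenceVec [Fintype V] [DecidableEq V] (hG : G.IsAcyclic) :
    LinearIndependent (ZMod 2) fun e : G.edgeSet ↦ incidenceVec (e : Sym2 V) := by
  rw [linearIndependent_iff']
  intro s g hg i hi
  by_contra hgi
  refine hG.sum_incidenceVec_ne_zero (S := (s.filter (g · ≠ 0)).map (.subtype _)) ?_ ?_ ?_
  · intro e he
    obtain ⟨e, -, rfl⟩ := mem_map.mp he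
    exact e.2
  · exact ⟨i, mem_map_of_mem _ (mem_filter.mpr ⟨hi, hgi⟩)⟩
  · rw [sum_map, sum_filter]
    refine (sum_congr rfl fun e _ ↦ ?_).trans hg
    rcases (by decide : ∀ c : ZMod 2, c = 0 ∨ c = 1) (g e) with h | h <;> simp [h]

theorem IsAcyclic.mem_edges_iff_of_isPath (hG : G.IsAcyclic) {u v x y : V} {p : G.Walk u v}
    {q : G.Walk x y} (hp : p.IsPath) (hq : q.IsPath) (h : s(u, v) = s(x, y)) {e : Sym2 V} :
    e ∈ p.edges ↔ e ∈ q.edges := by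
  rcases Sym2.eq_iff.mp h with ⟨rfl, rfl⟩ | ⟨rfl, rfl⟩
  · obtain rfl : p = q :=
      congrArg Subtype.val ((hG.subsingleton_path _ _).elim ⟨p, hp⟩ ⟨q, hq⟩)
    rfl
  · obtain rfl : p.reverse = q :=
      congrArg Subtype.val ((hG.subsingleton_path _ _).elim ⟨_, hp.reverse⟩ ⟨q, hq⟩)
    rw [Walk.edges_reverse, List.mem_reverse]

end SimpleGraph

open SimpleGraph Sym2

/-- Adolphson–Hu edge-exchange property: for any two trees `T₁`, `T₂` on the same finite
vertex set there is a bijection `ψ` of edge sets such that each edge `{u,v}` of `T₁` is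
mapped to an edge of `T₂` lying on the unique path in `T₂` between `u` and `v`. -/
theorem stmt7 {V : Type*} [Fintype V] (T₁ T₂ : SimpleGraph V)
    (h1 : T₁.IsTree) (h2 : T₂.IsTree) :
    ∃ ψ : T₁.edgeSet ≃ T₂.edgeSet,
      ∀ (u v : V) (h : T₁.Adj u v),
        ∀ p : T₂.Walk u v, p.IsPath →
          (ψ ⟨s(u, v), T₁.mem_edgeSet.mpr h⟩ : Sym2 V) ∈ p.edges := by
  classical
  have hpath : ∀ e : T₁.edgeSet, ∃ u v, ∃ p : T₂.Walk u v,
      p.IsPath ∧ T₁.Adj u v ∧ (e : Sym2 V) = s(u, v) := by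
    rintro ⟨e, he⟩
    induction e using Sym2.ind with
    | _ u v =>
      obtain ⟨p, hp⟩ := h2.connected.exists_isPath u v
      exact ⟨u, v, p, hp, he, rfl⟩
  choose u v p hp hadj he using hpath
  obtain ⟨φ, hφ, hφp⟩ :=
    h1.isAcyclic.linearIndependent_incidenceVec.exists_injective_mem_of_mem_span incidenceVec
      (fun e ↦ (p e).edges.toFinset) fun e ↦ by
      rw [he, ← (hp e).sum_incidenceVec_edges (hadj e).ne]
      exact sum_mem fun f hf ↦ subset_span ⟨f, hf, rfl⟩
  let ψ : T₁.edgeSet → T₂.edgeSet :=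
    fun e ↦ ⟨φ e, (p e).edges_subset_edgeSet (List.mem_toFinset.mp (hφp e))⟩
  have hcard : Nat.card T₂.edgeSet ≤ Nat.card T₁.edgeSet := by
    have := (isTree_iff_connected_and_card.mp h1).2
    have := (isTree_iff_connected_and_card.mp h2).2
    omega
  have hψ : ψ.Bijective :=
    Function.Injective.bijective_of_nat_card_le (fun e e' h ↦ hφ (congrArg Subtype.val h)) hcard
  refine ⟨.ofBijective ψ hψ, fun a b hab q hq ↦ ?_⟩
  exact (h2.isAcyclic.mem_edges_iff_of_isPath hq (hp _) (he ⟨s(a, b), hab⟩)).mpr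
    (List.mem_toFinset.mp (hφp _))
end

section
/- Let V be a finite set, let f : 𝒫(V) → ℝ be symmetric (f(W) = f(V \ W) for all W ⊆ V), and let g : ℝ → ℝ be non-decreasing. Let T₁ be a tree on V with the Gomory–Hu property for f: for every edge e = {u,v} of T₁, with C_e the connected component of u in T₁ − e, f(C_e) = min{ f(W) : W ⊆ V, |W ∩ {u,v}| = 1 }. Then for every tree T₂ on V, Σ_{e ∈ E(T₁)} g(f(C_e)) ≤ Σ_{e' ∈ E(T₂)} g(f(C_{e'})), where for each edge e' of T₂, C_{e'} denotes a connected component of T₂ − e'. -/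
/-!
By the Adolphson–Hu argument there is a bijection `σ` from the edges of `T₁` to the edges of `T₂`
such that `σ e` separates the ends of `e` in `T₂`, i.e. lies on the `T₂`-path between them. It comes
from Hall's theorem: for a set `S` of edges of `T₁`, the edges of `T₂` separating the ends of some
`e ∈ S` contain the `T₂`-paths between the ends of every `e ∈ S`, so they span a graph with at most
as many components as the forest `S`, hence there are at least `|V| - c(S) = |S|` of them.
A component of `T₂ - σ e` then contains exactly one end of `e`, so the Gomory–Hu property gives
`f (C₁ e) ≤ f (C₂ (σ e))`; apply `g` and sum along `σ`.
-/

open Finset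
open scoped Classical

namespace SimpleGraph

variable {V : Type*} {G : SimpleGraph V}

def Separates (G : SimpleGraph V) (e' e : Sym2 V) : Prop :=
  Sym2.lift ⟨fun u v ↦ ¬ (G.deleteEdges {e'}).Reachable u v, fun _ _ ↦ by simp [reachable_comm]⟩ e

lemma Reachable.of_sup_edge {a b x y : V} (h : (G ⊔ edge a b).Reachable x y) :
    G.Reachable x y ∨ (G.Reachable x a ∧ G.Reachable b y) ∨
      (G.Reachable x b ∧ G.Reachable a y) := by
  obtain ⟨p⟩ := h
  induction p with
  | nil => exact .inl .rfl
  | cons hadj _ ih =>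
    rcases hadj with hadj | hadj
    · have := hadj.reachable
      rcases ih with h | ⟨h₁, h₂⟩ | ⟨h₁, h₂⟩
      exacts [.inl (this.trans h), .inr (.inl ⟨this.trans h₁, h₂⟩),
        .inr (.inr ⟨this.trans h₁, h₂⟩)]
    · obtain ⟨⟨rfl, rfl⟩ | ⟨rfl, rfl⟩, -⟩ := (edge_adj _ _ _ _).mp hadj
      · rcases ih with h | ⟨h₁, h₂⟩ | ⟨h₁, h₂⟩
        exacts [.inr (.inl ⟨.rfl, h⟩), .inl (h₁.symm.trans h₂), .inl h₂]
      · rcases ih with h | ⟨h₁, h₂⟩ | ⟨h₁, h₂⟩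
        exacts [.inr (.inr ⟨.rfl, h⟩), .inl h₂, .inl (h₁.symm.trans h₂)]

lemma Connected.reachable_deleteEdges_or (hG : G.Connected) (a b x : V) :
    (G.deleteEdges {s(a, b)}).Reachable a x ∨ (G.deleteEdges {s(a, b)}).Reachable b x := by
  rcases ((hG a x).mono (le_sdiff_sup : G ≤ G.deleteEdges {s(a, b)} ⊔ edge a b)).of_sup_edge
    with h | ⟨-, h⟩ | ⟨-, h⟩
  exacts [.inl h, .inr h, .inl h]

lemma xor_reachable_of_not_reachable {a b u v : V}
    (hab : ∀ x, G.Reachable a x ∨ G.Reachable b x) (huv : ¬ G.Reachable u v) :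
    Xor (G.Reachable a u) (G.Reachable a v) := by
  by_cases hu : G.Reachable a u
  · exact .inl ⟨hu, fun hv ↦ huv (hu.symm.trans hv)⟩
  · refine .inr ⟨(hab v).resolve_right fun hv ↦ huv ?_, hu⟩
    exact ((hab u).resolve_left hu).symm.trans hv

lemma Connected.xor_mem_of_not_reachable_deleteEdges (hG : G.Connected) {a b u v : V}
    {C : Set V} (hC : C = {x | (G.deleteEdges {s(a, b)}).Reachable a x} ∨
      C = {x | (G.deleteEdges {s(a, b)}).Reachable b x})
    (huv : ¬ (G.deleteEdges {s(a, b)}).Reachable u v) : Xor (u ∈ C) (v ∈ C) := by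
  rcases hC with rfl | rfl
  · exact xor_reachable_of_not_reachable (hG.reachable_deleteEdges_or a b) huv
  · rw [Sym2.eq_swap] at huv ⊢
    exact xor_reachable_of_not_reachable (hG.reachable_deleteEdges_or b a) huv

lemma IsAcyclic.not_reachable_deleteEdges_of_mem_edges (hG : G.IsAcyclic) {u v : V}
    {p : G.Walk u v} (hp : p.IsPath) {e : Sym2 V} (he : e ∈ p.edges) :
    ¬ (G.deleteEdges {e}).Reachable u v := by
  rintro ⟨q⟩
  have hle := G.deleteEdges_le {e}
  have hq : q.bypass.mapLe hle = p := congrArg Subtype.val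
    ((hG.subsingleton_path u v).elim ⟨_, q.bypass_isPath.mapLe hle⟩ ⟨p, hp⟩)
  rw [← hq, Walk.edges_mapLe_eq_edges] at he
  simpa using q.bypass.edges_subset_edgeSet he

lemma injective_map_sup_edge (a b : V) :
    Function.Injective fun c : {c : G.ConnectedComponent // c ≠ G.connectedComponentMk b} ↦
      c.1.map (Hom.ofLE (le_sup_left : G ≤ G ⊔ edge a b)) := by
  rintro ⟨c, hc⟩ ⟨d, hd⟩ h
  induction c using ConnectedComponent.ind with | h x => ?_
  induction d using ConnectedComponent.ind with | h y => ?_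
  simp only [ConnectedComponent.map_mk, ConnectedComponent.eq, Hom.coe_ofLE, id] at h
  rcases h.of_sup_edge with h | ⟨-, h⟩ | ⟨h, -⟩
  · exact Subtype.ext (ConnectedComponent.sound h)
  · exact absurd (ConnectedComponent.sound h.symm) hd
  · exact absurd (ConnectedComponent.sound h) hc

lemma surjective_map_sup_edge {a b : V} (hab : ¬ G.Reachable a b) :
    Function.Surjective fun c : {c : G.ConnectedComponent // c ≠ G.connectedComponentMk b} ↦
      c.1.map (Hom.ofLE (le_sup_left : G ≤ G ⊔ edge a b)) := by
  intro c
  induction c using ConnectedComponent.ind with | h y => ?_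
  by_cases hy : G.connectedComponentMk y = G.connectedComponentMk b
  · refine ⟨⟨G.connectedComponentMk a, fun h ↦ hab (ConnectedComponent.exact h)⟩, ?_⟩
    have hadj : (G ⊔ edge a b).Adj a b :=
      .inr ((edge_adj ..).mpr ⟨.inl ⟨rfl, rfl⟩, fun h ↦ hab (h ▸ .rfl)⟩)
    simp only [ConnectedComponent.map_mk, Hom.coe_ofLE, id, ConnectedComponent.eq]
    exact hadj.reachable.trans ((ConnectedComponent.exact hy).symm.mono le_sup_left)
  · exact ⟨⟨_, hy⟩, rfl⟩

lemma fromEdgeSet_insert_mk (F : Finset (Sym2 V)) (a b : V) :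
    fromEdgeSet ↑(insert s(a, b) F) = fromEdgeSet ↑F ⊔ edge a b := by
  rw [coe_insert, Set.insert_eq, fromEdgeSet_union, sup_comm]
  rfl

lemma card_connectedComponent_bot : Nat.card (⊥ : SimpleGraph V).ConnectedComponent = Nat.card V :=
  (Nat.card_eq_of_bijective _ ⟨fun _ _ h ↦ reachable_bot.mp (ConnectedComponent.exact h),
    fun c ↦ c.exists_rep⟩).symm

section Finite

variable [Finite V]

lemma card_connectedComponent_eq_card_ne_add_one (G : SimpleGraph V) (b : V) :
    Nat.card G.ConnectedComponent =
      Nat.card {c : G.ConnectedComponent // c ≠ G.connectedComponentMk b} + 1 := by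
  rw [← Nat.card_congr (Equiv.optionSubtypeNe _), Finite.card_option]

lemma card_connectedComponent_le_sup_edge_add_one (G : SimpleGraph V) (a b : V) :
    Nat.card G.ConnectedComponent ≤ Nat.card (G ⊔ edge a b).ConnectedComponent + 1 := by
  rw [card_connectedComponent_eq_card_ne_add_one G b]
  exact Nat.add_le_add_right (Nat.card_le_card_of_injective _ (injective_map_sup_edge a b)) 1

lemma card_connectedComponent_sup_edge_add_one {a b : V} (hab : ¬ G.Reachable a b) :
    Nat.card (G ⊔ edge a b).ConnectedComponent + 1 = Nat.card G.ConnectedComponent := by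
  rw [card_connectedComponent_eq_card_ne_add_one G b,
    Nat.card_eq_of_bijective _ ⟨injective_map_sup_edge a b, surjective_map_sup_edge hab⟩]

lemma card_le_card_connectedComponent_fromEdgeSet_add_card (F : Finset (Sym2 V)) :
    Nat.card V ≤ Nat.card (fromEdgeSet (F : Set (Sym2 V))).ConnectedComponent + #F := by
  induction F using Finset.induction with
  | empty => simp [card_connectedComponent_bot]
  | insert e F he ih =>
    induction e using Sym2.ind with | h a b => ?_
    have := card_connectedComponent_le_sup_edge_add_one (fromEdgeSet (F : Set (Sym2 V))) a b
    rw [fromEdgeSet_insert_mk, card_insert_of_notMem he]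
    omega

lemma IsAcyclic.card_connectedComponent_fromEdgeSet_add_card (hG : G.IsAcyclic)
    {F : Finset (Sym2 V)} (hF : (F : Set (Sym2 V)) ⊆ G.edgeSet) :
    Nat.card (fromEdgeSet (F : Set (Sym2 V))).ConnectedComponent + #F = Nat.card V := by
  induction F using Finset.induction with
  | empty => simp [card_connectedComponent_bot]
  | insert e F he ih =>
    induction e using Sym2.ind with | h a b => ?_
    rw [coe_insert, Set.insert_subset_iff] at hF
    have hadj : G.Adj a b := hF.1
    have hle : fromEdgeSet (F : Set (Sym2 V)) ⊔ edge a b ≤ G :=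
      sup_le ((fromEdgeSet_le _).mpr fun e he ↦ hF.2 he.1) ((edge_le_iff _).mpr (.inr hadj))
    have hnr : ¬ (fromEdgeSet (F : Set (Sym2 V))).Reachable a b := fun hr ↦ by
      rcases (isAcyclic_sup_fromEdgeSet_iff.mp (hG.anti hle)).2 hr with h | h
      exacts [hadj.ne h, he ((fromEdgeSet_adj _).mp h).1]
    rw [fromEdgeSet_insert_mk, card_insert_of_notMem he, ← ih hF.2,
      ← card_connectedComponent_sup_edge_add_one hnr]
    ring

lemma card_connectedComponent_le_of_forall_adj_reachable {H K : SimpleGraph V}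
    (h : ∀ u v, H.Adj u v → K.Reachable u v) :
    Nat.card K.ConnectedComponent ≤ Nat.card H.ConnectedComponent := by
  refine Nat.card_le_card_of_surjective
    (ConnectedComponent.lift K.connectedComponentMk fun u v p hp ↦ ?_)
    (ConnectedComponent.ind fun v ↦ ⟨H.connectedComponentMk v, rfl⟩)
  refine ConnectedComponent.sound ?_
  clear hp
  induction p with
  | nil => rfl
  | cons hadj _ ih => exact (h _ _ hadj).trans ih

lemma IsAcyclic.card_le_card_of_forall_reachable (hG : G.IsAcyclic) {F₁ F₂ : Finset (Sym2 V)}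
    (hF₁ : (F₁ : Set (Sym2 V)) ⊆ G.edgeSet)
    (h : ∀ u v, s(u, v) ∈ F₁ → (fromEdgeSet (F₂ : Set (Sym2 V))).Reachable u v) :
    #F₁ ≤ #F₂ := by
  have h₁ := hG.card_connectedComponent_fromEdgeSet_add_card hF₁
  have h₂ := card_le_card_connectedComponent_fromEdgeSet_add_card F₂
  have h₃ := card_connectedComponent_le_of_forall_adj_reachable
    fun u v huv ↦ h u v ((fromEdgeSet_adj _).mp huv).1
  omega

end Finite

lemma IsAcyclic.exists_injective_separates [Fintype V] {T₁ T₂ : SimpleGraph V}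
    (h₁ : T₁.IsAcyclic) (h₂ : T₂.IsTree) :
    ∃ σ : T₁.edgeSet → T₂.edgeSet, Function.Injective σ ∧ ∀ e, T₂.Separates (σ e) e := by
  refine (Fintype.all_card_le_filter_rel_iff_exists_injective
    fun (e : T₁.edgeSet) (e' : T₂.edgeSet) ↦ T₂.Separates e' e).mp fun A ↦ ?_
  rw [← card_map (.subtype _), ← card_map (.subtype _) (s := filter _ _)]
  refine h₁.card_le_card_of_forall_reachable (by simp) fun u v huv ↦ ?_
  obtain ⟨huv, hA⟩ : ∃ h : T₁.Adj u v, ⟨s(u, v), h⟩ ∈ A := by simpa using huv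
  obtain ⟨p, hp⟩ := h₂.connected.preconnected.exists_isPath u v
  refine ⟨p.transfer _ fun e' he' ↦ ?_⟩
  have hT₂ := p.edges_subset_edgeSet he'
  have hsep := h₂.isAcyclic.not_reachable_deleteEdges_of_mem_edges hp he'
  simp only [edgeSet_fromEdgeSet, coe_map, Set.mem_sdiff, Set.mem_image, coe_filter]
  exact ⟨⟨⟨e', hT₂⟩, ⟨mem_univ _, _, hA, hsep⟩, rfl⟩, T₂.not_isDiag_of_mem_edgeSet hT₂⟩

lemma IsTree.exists_edgeSet_equiv_separates [Fintype V] {T₁ T₂ : SimpleGraph V}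
    (h₁ : T₁.IsTree) (h₂ : T₂.IsTree) :
    ∃ σ : T₁.edgeSet ≃ T₂.edgeSet, ∀ e, T₂.Separates (σ e) e := by
  obtain ⟨σ, hσ, hsep⟩ := h₁.isAcyclic.exists_injective_separates h₂
  have hcard : Fintype.card T₁.edgeSet = Fintype.card T₂.edgeSet := by
    have := h₁.card_edgeFinset
    have := h₂.card_edgeFinset
    simp only [edgeFinset, Set.toFinset_card] at *
    omega
  exact ⟨.ofBijective σ ((Fintype.bijective_iff_injective_and_card σ).mpr ⟨hσ, hcard⟩), hsep⟩

end SimpleGraph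

theorem stmt8_general {V : Type*} [Fintype V] (f : Set V → ℝ)
    (g : ℝ → ℝ) (hg : Monotone g)
    (T₁ T₂ : SimpleGraph V) (h1 : T₁.IsTree) (h2 : T₂.IsTree)
    (C₁ C₂ : Sym2 V → Set V)
    (hC₂ : ∀ u v : V, T₂.Adj u v →
      C₂ s(u, v) = {x | (T₂.deleteEdges {s(u, v)}).Reachable u x} ∨
      C₂ s(u, v) = {x | (T₂.deleteEdges {s(u, v)}).Reachable v x})
    (hGH : ∀ u v : V, T₁.Adj u v →
      IsLeast {r : ℝ | ∃ W : Set V, Xor' (u ∈ W) (v ∈ W) ∧ r = f W} (f (C₁ s(u, v)))) :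
    ∑ e ∈ T₁.edgeFinset, g (f (C₁ e)) ≤ ∑ e ∈ T₂.edgeFinset, g (f (C₂ e)) := by
  obtain ⟨σ, hσ⟩ := h1.exists_edgeSet_equiv_separates h2
  have hterm (e : T₁.edgeSet) : g (f (C₁ e)) ≤ g (f (C₂ (σ e))) := by
    obtain ⟨e, he⟩ := e
    induction e using Sym2.ind with | h u v => ?_
    have hsep := hσ ⟨s(u, v), he⟩
    generalize σ ⟨s(u, v), he⟩ = e' at hsep ⊢
    obtain ⟨e', he'⟩ := e'
    induction e' using Sym2.ind with | h a b => ?_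
    exact hg ((hGH u v he).2
      ⟨_, h2.connected.xor_mem_of_not_reachable_deleteEdges (hC₂ a b he') hsep, rfl⟩)
  calc ∑ e ∈ T₁.edgeFinset, g (f (C₁ e))
      = ∑ e : T₁.edgeSet, g (f (C₁ e)) := (Finset.sum_set_coe _).symm
    _ ≤ ∑ e : T₁.edgeSet, g (f (C₂ (σ e))) := Finset.sum_le_sum fun e _ ↦ hterm e
    _ = ∑ e : T₂.edgeSet, g (f (C₂ e)) := σ.sum_comp fun e ↦ g (f (C₂ e))
    _ = ∑ e ∈ T₂.edgeFinset, g (f (C₂ e)) :=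
      Finset.sum_set_coe (f := fun e ↦ g (f (C₂ e))) T₂.edgeSet

/-- A Gomory–Hu tree `T₁` for a symmetric set function `f` minimizes
`∑_{e ∈ T} g(f(C_e))` over all trees `T` on `V`, for every non-decreasing `g`. -/
theorem stmt8 {V : Type*} [Fintype V] (f : Set V → ℝ)
    (hfsym : ∀ W : Set V, f W = f Wᶜ)
    (g : ℝ → ℝ) (hg : Monotone g)
    (T₁ T₂ : SimpleGraph V) (h1 : T₁.IsTree) (h2 : T₂.IsTree)
    (C₁ C₂ : Sym2 V → Set V)
    (hC₁ : ∀ u v : V, T₁.Adj u v →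
      C₁ s(u, v) = {x | (T₁.deleteEdges {s(u, v)}).Reachable u x} ∨
      C₁ s(u, v) = {x | (T₁.deleteEdges {s(u, v)}).Reachable v x})
    (hC₂ : ∀ u v : V, T₂.Adj u v →
      C₂ s(u, v) = {x | (T₂.deleteEdges {s(u, v)}).Reachable u x} ∨
      C₂ s(u, v) = {x | (T₂.deleteEdges {s(u, v)}).Reachable v x})
    (hGH : ∀ u v : V, T₁.Adj u v →
      IsLeast {r : ℝ | ∃ W : Set V, Xor' (u ∈ W) (v ∈ W) ∧ r = f W} (f (C₁ s(u, v)))) :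
    ∑ e ∈ T₁.edgeFinset, g (f (C₁ e)) ≤ ∑ e ∈ T₂.edgeFinset, g (f (C₂ e)) :=
  stmt8_general f g hg T₁ T₂ h1 h2 C₁ C₂ hC₂ hGH
end

section
/- For every real K > 0 there exist an integer k ≥ 4, a symmetric nonnegative demand matrix (λ_{i,j}) on vertex set V = {v₁,...,v_k}, and two trees T* and T' on V, such that Σ_{e ∈ E(T*)} (λ_e(T*))^{1/3} > K · Σ_{e' ∈ E(T')} (λ_{e'}(T'))^{1/3} and Σ_{e' ∈ E(T')} (λ_{e'}(T'))^{1/3} > 0, where for a tree T and edge e of T, λ_e(T) denotes the λ-capacity Σ_{i ∈ C_e, j ∉ C_e} λ_{i,j} of the cut between the two connected components of T − e. -/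
open Finset
open scoped Classical

/-!
Put unit demand between the two ends `0` and `last n` of the path `0 – 1 – ⋯ – n`. Deleting any
edge of the path separates the two ends, so each of its `n` edges has rate 1 and the path costs
`n`. A tree containing the edge `{0, last n}` instead routes the whole demand through that one
edge: deleting any other edge leaves `0` and `last n` adjacent, so that edge has rate 0 and the
tree costs 1. Letting `n → ∞` makes the ratio unbounded.
-/

noncomputable def pairDemand {V : Type*} (p q x y : V) : ℝ := if s(x, y) = s(p, q) then 1 else 0

section PairDemand

variable {V : Type*}

theorem pairDemand_nonneg (p q x y : V) : 0 ≤ pairDemand p q x y := by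
  unfold pairDemand; split_ifs <;> norm_num

theorem pairDemand_comm (p q x y : V) : pairDemand p q x y = pairDemand p q y x := by
  rw [pairDemand, pairDemand, Sym2.eq_swap]

theorem sum_sum_pairDemand {p q : V} (hpq : p ≠ q) (A B : Finset V) :
    ∑ x ∈ A, ∑ y ∈ B, pairDemand p q x y =
      (if p ∈ A ∧ q ∈ B then 1 else 0) + (if q ∈ A ∧ p ∈ B then 1 else 0) := by
  have hsplit : ∀ x y : V, pairDemand p q x y =
      (if x = p then 1 else 0) * (if y = q then 1 else 0) +
        (if x = q then 1 else 0) * (if y = p then 1 else 0) := by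
    intro x y
    rcases eq_or_ne x p with rfl | hxp <;> rcases eq_or_ne x q with rfl | hxq <;>
      simp_all [pairDemand, hpq.symm]
  simp only [hsplit, sum_add_distrib]
  rw [← sum_mul_sum, ← sum_mul_sum]
  simp only [sum_ite_eq', ite_zero_mul_ite_zero, mul_one]

end PairDemand

namespace SimpleGraph

variable {V : Type*}

theorem Reachable.iff_of_forall_adj {G : SimpleGraph V} {P : V → Prop}
    (hP : ∀ x y, G.Adj x y → (P x ↔ P y)) {x y : V} (h : G.Reachable x y) : P x ↔ P y := by
  obtain ⟨w⟩ := h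
  induction w with
  | nil => rfl
  | cons ha _ ih => exact (hP _ _ ha).trans ih

theorem exists_isTree_adj {p q : V} (hpq : p ≠ q) : ∃ T : SimpleGraph V, T.IsTree ∧ T.Adj p q := by
  have : Nonempty V := ⟨p⟩
  have hedge : (edge p q).IsAcyclic := by
    simpa using isAcyclic_bot.sup_edge_of_not_reachable (u := p) (v := q) (by simpa using hpq)
  obtain ⟨T, hle, -, hT⟩ := connected_top.exists_isTree_le_of_le_of_isAcyclic le_top hedge
  exact ⟨T, hT, hle ((edge_adj ..).mpr ⟨Or.inl ⟨rfl, rfl⟩, hpq⟩)⟩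

section PathGraph

variable {n : ℕ} {u v : Fin n}

theorem pathGraph_deleteEdges_reachable_of_forall_ne (huv : u.val + 1 = v.val) {a b : Fin n}
    (hab : a ≤ b) (hne : ∀ i : Fin n, a ≤ i → i < b → i ≠ u) :
    ((pathGraph n).deleteEdges {s(u, v)}).Reachable a b := by
  obtain ⟨b, hb⟩ := b
  induction b with
  | zero => rw [show a = ⟨0, hb⟩ from Fin.ext (by simpa [Fin.le_def] using hab)]
  | succ b ih =>
    rcases hab.eq_or_lt with rfl | hlt
    · rfl
    have hab' : a ≤ ⟨b, by omega⟩ := by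
      rw [Fin.lt_def] at hlt
      exact Fin.le_def.mpr (by simp only at hlt ⊢; omega)
    have hbu := hne _ hab' (Fin.lt_def.mpr (by simp))
    refine (ih _ hab' fun i hai hib => hne i hai (hib.trans (Fin.lt_def.mpr (by simp)))).trans
      (Adj.reachable ?_)
    simp only [deleteEdges_adj, pathGraph_adj, Set.mem_singleton_iff, Sym2.eq_iff, Fin.ext_iff,
      ne_eq, true_or, true_and] at hbu ⊢
    omega

theorem pathGraph_deleteEdges_reachable_iff (huv : u.val + 1 = v.val) {x y : Fin n} :
    ((pathGraph n).deleteEdges {s(u, v)}).Reachable x y ↔ (x ≤ u ↔ y ≤ u) := by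
  constructor
  · refine Reachable.iff_of_forall_adj (P := (· ≤ u)) fun a b hab => ?_
    simp only [deleteEdges_adj, pathGraph_adj, Set.mem_singleton_iff, Sym2.eq_iff, Fin.ext_iff,
      Fin.le_def] at hab ⊢
    omega
  · intro h
    wlog hxy : x ≤ y generalizing x y
    · exact (this h.symm (le_of_not_ge hxy)).symm
    refine pathGraph_deleteEdges_reachable_of_forall_ne huv hxy fun i hxi hiy hiu => ?_
    subst hiu
    exact hiy.not_ge (h.mp hxi)

theorem pathGraph_isTree (n : ℕ) : (pathGraph (n + 1)).IsTree := by
  refine ⟨pathGraph_connected n, isAcyclic_iff_forall_adj_isBridge.mpr fun a b hab => ?_⟩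
  rw [isBridge_iff]
  rcases pathGraph_adj.mp hab with h | h
  · rw [pathGraph_deleteEdges_reachable_iff h, Fin.le_def, Fin.le_def]
    omega
  · rw [Sym2.eq_swap, reachable_comm, pathGraph_deleteEdges_reachable_iff h, Fin.le_def,
      Fin.le_def]
    omega

theorem card_edgeFinset_pathGraph (n : ℕ) [Fintype (pathGraph (n + 1)).edgeSet] :
    #(pathGraph (n + 1)).edgeFinset = n := by
  have := (pathGraph_isTree n).card_edgeFinset
  rwa [Fintype.card_fin, Nat.add_right_cancel_iff] at this

end PathGraph

section CutCapacity

variable [Fintype V]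

/-- Applied to `T.deleteEdges {s(u, v)}`, this is the rate `λ_e(T)` of the tree edge `e = s(u, v)`:
the `lam`-capacity of the cut between the component of `u` in `T − e` and the rest. -/
noncomputable def cutCapacity (G : SimpleGraph V) [DecidableRel G.Reachable] (lam : V → V → ℝ)
    (u : V) : ℝ :=
  ∑ x ∈ univ.filter (G.Reachable u), ∑ y ∈ univ.filter (fun y => ¬ G.Reachable u y), lam x y

theorem cutCapacity_pairDemand (G : SimpleGraph V) [DecidableRel G.Reachable] {p q : V}
    (hpq : p ≠ q) (u : V) :
    G.cutCapacity (pairDemand p q) u = if (G.Reachable u p ↔ G.Reachable u q) then 0 else 1 := by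
  rw [cutCapacity, sum_sum_pairDemand hpq]
  by_cases hp : G.Reachable u p <;> by_cases hq : G.Reachable u q <;> simp [hp, hq]

theorem cutCapacity_deleteEdges_pairDemand [DecidableEq V] {G : SimpleGraph V} (hG : G.IsAcyclic)
    {p q u v : V} [DecidableRel (G.deleteEdges {s(u, v)}).Reachable] (hpq : G.Adj p q)
    (huv : G.Adj u v) :
    (G.deleteEdges {s(u, v)}).cutCapacity (pairDemand p q) u =
      if s(u, v) = s(p, q) then 1 else 0 := by
  rw [cutCapacity_pairDemand _ hpq.ne]
  split_ifs with hsep he he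
  · have hbridge := isBridge_iff.mp (isAcyclic_iff_forall_adj_isBridge.mp hG huv)
    rcases Sym2.eq_iff.mp he with ⟨rfl, rfl⟩ | ⟨rfl, rfl⟩
    · exact absurd (hsep.mp (Reachable.refl _)) hbridge
    · exact absurd (hsep.mpr (Reachable.refl _)) hbridge
  · rfl
  · rfl
  · have hadj : (G.deleteEdges {s(u, v)}).Adj p q :=
      (deleteEdges_adj ..).mpr ⟨hpq, fun h => he (Set.mem_singleton_iff.mp h).symm⟩
    exact absurd ⟨fun h => h.trans hadj.reachable, fun h => h.trans hadj.reachable.symm⟩ hsep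

theorem cutCapacity_pathGraph_pairDemand {n : ℕ} {u v : Fin (n + 1)}
    [DecidableRel ((pathGraph (n + 1)).deleteEdges {s(u, v)}).Reachable]
    (huv : (pathGraph (n + 1)).Adj u v) :
    ((pathGraph (n + 1)).deleteEdges {s(u, v)}).cutCapacity (pairDemand 0 (Fin.last n)) u = 1 := by
  have h0 : (0 : Fin (n + 1)) ≠ Fin.last n := by
    rcases pathGraph_adj.mp huv with h | h <;> simp [Fin.ext_iff] <;> omega
  rw [cutCapacity_pairDemand _ h0]
  rcases pathGraph_adj.mp huv with h | h
  · simp only [pathGraph_deleteEdges_reachable_iff h, Fin.le_def, Fin.val_zero, Fin.val_last]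
    rw [if_neg (by omega)]
  · have hr : ∀ x y, ((pathGraph (n + 1)).deleteEdges {s(u, v)}).Reachable x y ↔
        (x ≤ v ↔ y ≤ v) := by
      rw [Sym2.eq_swap]; exact fun x y => pathGraph_deleteEdges_reachable_iff h
    simp only [hr, Fin.le_def, Fin.val_zero, Fin.val_last]
    rw [if_neg (by omega)]

end CutCapacity

end SimpleGraph

open SimpleGraph

/-- Unbounded price of anarchy (cost-ratio form): for every `K > 0` there are `k ≥ 4`,
a symmetric nonnegative demand matrix on `Fin k`, and trees `Ts` (an equilibrium) and
`To` (optimal) on `Fin k`, such that the maintenance-cost objective `∑_e λ_e^{1/3}` of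
`Ts` exceeds `K` times that of `To`, the latter being positive.  Here the rate `λ_e` of
a tree edge `e = {u,v}` is the λ-capacity of the cut between the two connected
components of `T − e`. -/
theorem stmt14 : ∀ K : ℝ, 0 < K →
    ∃ k : ℕ, 4 ≤ k ∧
    ∃ (lam : Fin k → Fin k → ℝ) (_hnn : ∀ i j, 0 ≤ lam i j)
      (_hsym : ∀ i j, lam i j = lam j i)
      (Ts To : SimpleGraph (Fin k)) (_hTs : Ts.IsTree) (_hTo : To.IsTree)
      (caps capo : Sym2 (Fin k) → ℝ),
      (∀ u v : Fin k, Ts.Adj u v →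
        caps s(u, v) =
          ∑ x ∈ Finset.univ.filter (fun x => (Ts.deleteEdges {s(u, v)}).Reachable u x),
            ∑ y ∈ Finset.univ.filter (fun y => ¬ (Ts.deleteEdges {s(u, v)}).Reachable u y),
              lam x y) ∧
      (∀ u v : Fin k, To.Adj u v →
        capo s(u, v) =
          ∑ x ∈ Finset.univ.filter (fun x => (To.deleteEdges {s(u, v)}).Reachable u x),
            ∑ y ∈ Finset.univ.filter (fun y => ¬ (To.deleteEdges {s(u, v)}).Reachable u y),
              lam x y) ∧
      0 < ∑ e ∈ To.edgeFinset, capo e ^ ((1 : ℝ) / 3) ∧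
      K * ∑ e ∈ To.edgeFinset, capo e ^ ((1 : ℝ) / 3)
        < ∑ e ∈ Ts.edgeFinset, caps e ^ ((1 : ℝ) / 3) := by
  intro K _
  obtain ⟨To, hTo, hpq⟩ := exists_isTree_adj (Fin.last_pos' (n := ⌈K⌉₊ + 3)).ne
  refine ⟨⌈K⌉₊ + 3 + 1, by omega, pairDemand 0 (Fin.last _), pairDemand_nonneg _ _,
    pairDemand_comm _ _, pathGraph _, To, pathGraph_isTree _, hTo,
    fun _ => 1, fun e => if e = s(0, Fin.last _) then 1 else 0,
    fun u v h => (cutCapacity_pathGraph_pairDemand h).symm,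
    fun u v h => (cutCapacity_deleteEdges_pairDemand hTo.isAcyclic hpq h).symm, ?_, ?_⟩
  · simp [Real.zero_rpow, hpq]
  · simp [Real.zero_rpow, hpq, card_edgeFinset_pathGraph]
    linarith [Nat.le_ceil K]
end
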